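/- arXiv:1002.2779 — 4 statements merged into one kernel-verified Lean document; each statement's English description precedes it below -/
import Mathlib

section
/- Let α be a real number and y a real number such that the sequence 2^j · y converges to 0 modulo αℤ uniformly as j → ∞ (i.e., dist(2^j y, αℤ) → 0). Then y = 2^{-N} k α for some integers k and N. -/
/-!
Measure the distance to `αℤ` by the norm of `AddCircle α`. A point at distance less than
`|α|/4` from `αℤ` has its distance exactly doubled by `x ↦ 2x`. Since `dist(2^j y, αℤ) → 0`,
from some index on these distances are small and so double at every step; a sequence tending
to `0` that eventually doubles at every step must hit `0`, i.e. `2^J y ∈ αℤ` for some `J`.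
-/

open Filter Topology Metric

theorem AddCircle.norm_coe_eq_infDist (p x : ℝ) :
    ‖(x : AddCircle p)‖ = infDist x (AddSubgroup.zmultiples p) := by
  rw [QuotientAddGroup.norm_eq_infDist, ← infDist_image (IsometryEquiv.subLeft x).isometry]
  congr 1
  · simp
  ext m
  simp only [Set.mem_image, Set.mem_ofPred_eq, QuotientAddGroup.eq, SetLike.mem_coe,
    IsometryEquiv.subLeft_apply]
  constructor
  · rintro ⟨y, hy, rfl⟩
    rwa [neg_add_eq_sub] at hy
  · exact fun hm => ⟨x - m, by simpa using hm, by ring⟩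

theorem AddCircle.norm_two_nsmul_of_norm_lt {p : ℝ} (x : AddCircle p) (hx : ‖x‖ < |p| / 4) :
    ‖2 • x‖ = 2 * ‖x‖ := by
  have hp : p ≠ 0 := by
    rintro rfl
    rw [abs_zero, zero_div] at hx
    exact (norm_nonneg x).not_gt hx
  obtain ⟨s, rfl⟩ := QuotientAddGroup.mk_surjective x
  -- the representative of `x` nearest to `0`
  set t := s - round (p⁻¹ * s) * p
  have hst : (s : AddCircle p) = t := by
    rw [← sub_eq_zero, ← AddCircle.coe_sub, AddCircle.coe_eq_zero_iff]
    exact ⟨round (p⁻¹ * s), by simp [t, zsmul_eq_mul]⟩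
  have hs : ‖(s : AddCircle p)‖ = |t| := AddCircle.norm_eq p
  have h2t : |2 * t| = 2 * |t| := by rw [abs_mul, abs_two]
  rw [hs] at hx ⊢
  rw [hst, ← AddCircle.coe_nsmul, nsmul_eq_mul, Nat.cast_ofNat,
    (AddCircle.norm_coe_eq_abs_iff p hp).mpr (by linarith), h2t]

theorem exists_eq_zero_of_tendsto_of_eventually_eq_mul {u : ℕ → ℝ} {c : ℝ} (hc : 1 < |c|)
    (hu : Tendsto u atTop (𝓝 0)) (hrec : ∀ᶠ j in atTop, u (j + 1) = c * u j) :
    ∃ J, u J = 0 := by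
  obtain ⟨J, hJ⟩ := eventually_atTop.mp hrec
  have hc0 : c ≠ 0 := by rintro rfl; norm_num at hc
  have hback : ∀ m, u J = c⁻¹ ^ m * u (m + J) := by
    intro m
    induction m with
    | zero => simp
    | succ m ih => rw [ih, Nat.add_right_comm, hJ _ (Nat.le_add_left J m), pow_succ]; field_simp
  refine ⟨J, (tendsto_const_nhds_iff (l := (atTop : Filter ℕ))).mp ?_⟩
  have hc_inv : |c⁻¹| < 1 := by rw [abs_inv]; exact inv_lt_one_of_one_lt₀ hc
  rw [funext hback, ← mul_zero 0]
  exact (tendsto_pow_atTop_nhds_zero_of_abs_lt_one hc_inv).mul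
    (hu.comp (tendsto_add_atTop_nat J))

/-- If `2^j · y → 0` modulo `αℤ` (distance to the set `{kα : k ∈ ℤ}` tends to 0),
then `y = 2^{-N} k α` for some integers `k, N`. -/
theorem stmt0 (α y : ℝ) (hα : α ≠ 0)
    (h : Filter.Tendsto
      (fun j : ℕ => Metric.infDist ((2:ℝ) ^ j * y) (Set.range fun k : ℤ => (k : ℝ) * α))
      Filter.atTop (nhds 0)) :
    ∃ (k N : ℤ), y = (2:ℝ) ^ (-N) * (k : ℝ) * α := by
  have hlattice : (Set.range fun k : ℤ => (k : ℝ) * α) = AddSubgroup.zmultiples α := by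
    simp [AddSubgroup.coe_zmultiples, zsmul_eq_mul]
  set u : ℕ → ℝ := fun j => ‖((2 ^ j * y : ℝ) : AddCircle α)‖
  have hu : Tendsto u atTop (𝓝 0) := by
    simpa only [hlattice, ← AddCircle.norm_coe_eq_infDist] using h
  have hdouble : ∀ᶠ j in atTop, u (j + 1) = 2 * u j := by
    filter_upwards [hu.eventually_lt_const (by positivity : 0 < |α| / 4)] with j hj
    rw [← AddCircle.norm_two_nsmul_of_norm_lt _ hj, ← AddCircle.coe_nsmul, nsmul_eq_mul,
      Nat.cast_ofNat, ← mul_assoc, ← pow_succ']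
  obtain ⟨J, hJ⟩ := exists_eq_zero_of_tendsto_of_eventually_eq_mul (by norm_num) hu hdouble
  obtain ⟨k, hk⟩ := (AddCircle.coe_eq_zero_iff α).mp (norm_eq_zero.mp hJ)
  refine ⟨k, J, ?_⟩
  rw [zsmul_eq_mul] at hk
  rw [zpow_neg, zpow_natCast, mul_assoc, hk]
  field_simp
end

section
/- Define integers v_k inductively by v_1 = 1 and v_{k+1} = k·2^{v_k} + v_k + 1, and set α = Σ_{k=1}^∞ 2^{-v_k}. Then α is irrational. -/
/-!
Write `e k = v (k + 1)`, so that `e (k + 1) = (k + 1) * 2 ^ e k + e k + 1` for every `k` and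
`α = ∑ 2 ^ (-e k)`. Cutting the series after the term of index `K` leaves a fraction with
denominator `b = 2 ^ e K` and a positive tail of size at most `2 * 2 ^ (-e (K + 1))`. The gap
`e (K + 1) > K * 2 ^ e K ≥ K * e K` makes this tail smaller than `b ^ (-n)` once `K > n`, so `α`
is a Liouville number and in particular irrational.
-/

open Finset

section LacunarySeries

variable {m : ℕ} {e : ℕ → ℕ}

lemma inv_pow_nat_add_le (hm : 2 ≤ m) (he : StrictMono e) (i K : ℕ) :
    ((m : ℝ) ^ e (i + K))⁻¹ ≤ ((m : ℝ) ^ e K)⁻¹ * 2⁻¹ ^ i := by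
  have hm' : (2 : ℝ) ≤ m := by exact_mod_cast hm
  calc ((m : ℝ) ^ e (i + K))⁻¹ ≤ ((m : ℝ) ^ (i + e K))⁻¹ :=
        inv_anti₀ (by positivity) (pow_le_pow_right₀ (by linarith) (he.add_le_nat i K))
    _ = ((m : ℝ) ^ e K)⁻¹ * ((m : ℝ) ^ i)⁻¹ := by rw [pow_add, mul_inv, mul_comm]
    _ ≤ ((m : ℝ) ^ e K)⁻¹ * 2⁻¹ ^ i := by rw [inv_pow]; gcongr

lemma summable_inv_pow_of_strictMono (hm : 2 ≤ m) (he : StrictMono e) :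
    Summable fun k => ((m : ℝ) ^ e k)⁻¹ :=
  Summable.of_nonneg_of_le (fun _ => by positivity) (fun k => inv_pow_nat_add_le hm he k 0)
    ((summable_geometric_of_lt_one (by norm_num) (by norm_num)).mul_left _)

lemma tsum_inv_pow_nat_add_le (hm : 2 ≤ m) (he : StrictMono e) (K : ℕ) :
    ∑' i, ((m : ℝ) ^ e (i + K))⁻¹ ≤ 2 * ((m : ℝ) ^ e K)⁻¹ := by
  calc ∑' i, ((m : ℝ) ^ e (i + K))⁻¹ ≤ ∑' i, ((m : ℝ) ^ e K)⁻¹ * 2⁻¹ ^ i :=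
        Summable.tsum_le_tsum (inv_pow_nat_add_le hm he · K)
          ((summable_nat_add_iff K).mpr (summable_inv_pow_of_strictMono hm he))
          ((summable_geometric_of_lt_one (by norm_num) (by norm_num)).mul_left _)
    _ = 2 * ((m : ℝ) ^ e K)⁻¹ := by rw [tsum_mul_left, tsum_geometric_inv_two, mul_comm]

lemma pow_mul_sum_range_inv_pow (hm : m ≠ 0) (he : Monotone e) (K : ℕ) :
    (m : ℝ) ^ e K * ∑ k ∈ range (K + 1), ((m : ℝ) ^ e k)⁻¹ =
      ((∑ k ∈ range (K + 1), m ^ (e K - e k) : ℕ) : ℝ) := by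
  push_cast
  rw [mul_sum]
  refine sum_congr rfl fun k hk => ?_
  rw [pow_sub₀ _ (by exact_mod_cast hm) (he (by simpa [Nat.lt_succ_iff] using hk))]

theorem liouville_tsum_inv_pow (hm : 2 ≤ m) (he : StrictMono e)
    (hgap : ∀ n : ℕ, ∃ K, 0 < e K ∧ n * e K + 1 < e (K + 1)) :
    Liouville (∑' k, ((m : ℝ) ^ e k)⁻¹) := by
  intro n
  obtain ⟨K, hK, hKgap⟩ := hgap n
  have hm1 : (1 : ℝ) < m := by exact_mod_cast hm
  set b : ℝ := (m : ℝ) ^ e K with hb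
  set a : ℕ := ∑ k ∈ range (K + 1), m ^ (e K - e k) with ha
  set tail := ∑' i, ((m : ℝ) ^ e (i + (K + 1)))⁻¹
  have hsplit : ∑' k, ((m : ℝ) ^ e k)⁻¹ - a / b = tail := by
    rw [ha, ← pow_mul_sum_range_inv_pow (by omega) he.monotone, hb,
      mul_div_cancel_left₀ _ (by positivity),
      ← (summable_inv_pow_of_strictMono hm he).sum_add_tsum_nat_add (K + 1), add_sub_cancel_left]
  have htail_pos : 0 < tail :=
    ((summable_nat_add_iff (K + 1)).mpr (summable_inv_pow_of_strictMono hm he)).tsum_pos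
      (fun _ => by positivity) 0 (by positivity)
  have htail_lt : tail < 1 / b ^ n := by
    refine (tsum_inv_pow_nat_add_le hm he (K + 1)).trans_lt ?_
    rw [← div_eq_mul_inv, div_lt_div_iff₀ (by positivity) (by positivity), hb, ← pow_mul,
      one_mul]
    calc 2 * (m : ℝ) ^ (e K * n) ≤ m * m ^ (e K * n) := by gcongr; exact_mod_cast hm
      _ = m ^ (n * e K + 1) := by rw [mul_comm n, pow_succ, mul_comm]
      _ < m ^ e (K + 1) := pow_lt_pow_right₀ hm1 hKgap
  refine ⟨a, m ^ e K, ?_, ?_, ?_⟩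
  · exact_mod_cast one_lt_pow₀ hm1 hK.ne'
  · push_cast
    rw [← sub_ne_zero, hsplit]
    exact htail_pos.ne'
  · push_cast
    rwa [hsplit, abs_of_pos htail_pos]

end LacunarySeries

theorem stmt1_general (v : ℕ → ℕ)
    (hv : ∀ k ≥ 1, v (k + 1) = k * 2 ^ (v k) + v k + 1)
    (α : ℝ) (hα : α = ∑' k : ℕ, (2:ℝ) ^ (-(v (k + 1) : ℤ))) :
    Irrational α := by
  set e : ℕ → ℕ := fun k => v (k + 1)
  have he_succ (k : ℕ) : e (k + 1) = (k + 1) * 2 ^ e k + e k + 1 := hv (k + 1) (by omega)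
  have he : StrictMono e := strictMono_nat_of_lt_succ fun k => by rw [he_succ]; omega
  have hgap (n : ℕ) : ∃ K, 0 < e K ∧ n * e K + 1 < e (K + 1) := by
    refine ⟨n + 1, by rw [he_succ]; omega, ?_⟩
    have := Nat.lt_two_pow_self (n := e (n + 1))
    rw [he_succ (n + 1)]
    nlinarith
  have hα' : α = ∑' k, (((2 : ℕ) : ℝ) ^ e k)⁻¹ := by simp [hα, e]
  exact hα' ▸ (liouville_tsum_inv_pow le_rfl he hgap).irrational

/-- With `v 1 = 1`, `v (k+1) = k·2^(v k) + v k + 1`, the number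
`α = Σ_{k=1}^∞ 2^{-v k}` is irrational. -/
theorem stmt1 (v : ℕ → ℕ) (hv1 : v 1 = 1)
    (hv : ∀ k ≥ 1, v (k + 1) = k * 2 ^ (v k) + v k + 1)
    (α : ℝ) (hα : α = ∑' k : ℕ, (2:ℝ) ^ (-(v (k + 1) : ℤ))) :
    Irrational α :=
  stmt1_general v hv α hα
end

section
/- Define v_1 = 1, v_{k+1} = k·2^{v_k} + v_k + 1, α = Σ_{k=1}^∞ 2^{-v_k}, and n_k = 2^{v_k} for k ≥ 1. Then for every k ≥ 1, the fractional part of n_k·α satisfies n_k α - ⌊n_k α⌋ < 2^{-k·n_k}. -/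
/-!
Multiplying `∑ 2⁻¹ ^ u j` by `2 ^ u m` turns the terms with `j ≤ m` into integers, so the
fractional part is the scaled tail. When consecutive exponents differ by at least `2`, the tail is
dominated by a geometric series of ratio `1/4`, hence is at most `4/3` times its first term
`2 ^ u m * 2⁻¹ ^ u (m + 1)`. For `u j = v (j + 1)` and `m = k - 1` that term is
`2⁻¹ ^ (k * n k + 1)`, since `v (k + 1) - v k = k * n k + 1`.
-/

open Finset

section LacunaryBinary

variable {u : ℕ → ℕ}

theorem add_two_mul_le_of_gap (hu : ∀ j, u j + 2 ≤ u (j + 1)) (m j : ℕ) :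
    u m + 2 * j ≤ u (m + j) := by
  induction j with
  | zero => simp
  | succ j ih =>
    have := hu (m + j)
    rw [← add_assoc]
    omega

theorem inv_two_pow_le_of_gap (hu : ∀ j, u j + 2 ≤ u (j + 1)) (m j : ℕ) :
    (2⁻¹ : ℝ) ^ u (m + j) ≤ 2⁻¹ ^ u m * 4⁻¹ ^ j :=
  calc (2⁻¹ : ℝ) ^ u (m + j) ≤ 2⁻¹ ^ (u m + 2 * j) :=
        pow_le_pow_of_le_one (by norm_num) (by norm_num) (add_two_mul_le_of_gap hu m j)
    _ = 2⁻¹ ^ u m * 4⁻¹ ^ j := by rw [pow_add, pow_mul]; norm_num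

theorem summable_inv_two_pow_of_gap (hu : ∀ j, u j + 2 ≤ u (j + 1)) :
    Summable fun j ↦ (2⁻¹ : ℝ) ^ u j :=
  .of_nonneg_of_le (fun _ ↦ by positivity)
    (fun j ↦ by simpa only [zero_add] using inv_two_pow_le_of_gap hu 0 j)
    ((summable_geometric_of_lt_one (r := (4⁻¹ : ℝ)) (by norm_num) (by norm_num)).mul_left _)

theorem tsum_inv_two_pow_add_le_of_gap (hu : ∀ j, u j + 2 ≤ u (j + 1)) (m : ℕ) :
    ∑' j, (2⁻¹ : ℝ) ^ u (m + j) ≤ 4 / 3 * 2⁻¹ ^ u m :=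
  calc ∑' j, (2⁻¹ : ℝ) ^ u (m + j) ≤ ∑' j, (2⁻¹ : ℝ) ^ u m * 4⁻¹ ^ j :=
        (summable_inv_two_pow_of_gap hu).comp_injective (add_right_injective m) |>.tsum_le_tsum
          (inv_two_pow_le_of_gap hu m)
          ((summable_geometric_of_lt_one (by norm_num) (by norm_num)).mul_left _)
    _ = 4 / 3 * 2⁻¹ ^ u m := by
      rw [tsum_mul_left, tsum_geometric_of_lt_one (by norm_num) (by norm_num)]
      ring

theorem two_pow_mul_inv_two_pow_of_le {a b : ℕ} (h : a ≤ b) :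
    (2 : ℝ) ^ b * 2⁻¹ ^ a = 2 ^ (b - a) := by
  rw [inv_pow, pow_sub₀ _ two_ne_zero h]

theorem fract_two_pow_mul_tsum_le_of_gap (hu : ∀ j, u j + 2 ≤ u (j + 1)) (m : ℕ) :
    Int.fract ((2 : ℝ) ^ u m * ∑' j, (2⁻¹ : ℝ) ^ u j) ≤ 4 / 3 * (2 ^ u m * 2⁻¹ ^ u (m + 1)) := by
  have hmono : Monotone u := monotone_nat_of_le_succ fun j ↦ by have := hu j; omega
  set T := (2 : ℝ) ^ u m * ∑' j, (2⁻¹ : ℝ) ^ u (j + (m + 1))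
  have hT_le : T ≤ 4 / 3 * (2 ^ u m * 2⁻¹ ^ u (m + 1)) := by
    have htail := tsum_inv_two_pow_add_le_of_gap hu (m + 1)
    simp only [add_comm (m + 1)] at htail
    calc T ≤ 2 ^ u m * (4 / 3 * 2⁻¹ ^ u (m + 1)) :=
          mul_le_mul_of_nonneg_left htail (by positivity)
      _ = 4 / 3 * (2 ^ u m * 2⁻¹ ^ u (m + 1)) := by ring
  have hquarter : (2 : ℝ) ^ u m * 2⁻¹ ^ u (m + 1) ≤ 1 / 4 :=
    calc (2 : ℝ) ^ u m * 2⁻¹ ^ u (m + 1) ≤ 2 ^ u m * 2⁻¹ ^ (u m + 2) :=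
          mul_le_mul_of_nonneg_left (pow_le_pow_of_le_one (by norm_num) (by norm_num) (hu m))
            (by positivity)
      _ = 1 / 4 := by rw [pow_add, ← mul_assoc, ← mul_pow]; norm_num
  have hT_nonneg : 0 ≤ T := by positivity
  have hhead : (2 : ℝ) ^ u m * ∑ j ∈ range (m + 1), (2⁻¹ : ℝ) ^ u j
      = ((∑ j ∈ range (m + 1), 2 ^ (u m - u j) : ℕ) : ℝ) := by
    rw [mul_sum]
    push_cast
    refine sum_congr rfl fun j hj ↦ two_pow_mul_inv_two_pow_of_le (hmono ?_)
    exact Nat.lt_succ_iff.mp (mem_range.mp hj)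
  rw [← (summable_inv_two_pow_of_gap hu).sum_add_tsum_nat_add (m + 1), mul_add, hhead,
    Int.fract_natCast_add, Int.fract_eq_self.2 ⟨hT_nonneg, by linarith⟩]
  exact hT_le

end LacunaryBinary

theorem stmt2_general (v : ℕ → ℕ)
    (hv : ∀ k ≥ 1, v (k + 1) = k * 2 ^ (v k) + v k + 1)
    (α : ℝ) (hα : α = ∑' k : ℕ, (2:ℝ) ^ (-(v (k + 1) : ℤ)))
    (n : ℕ → ℕ) (hn : ∀ k, n k = 2 ^ (v k)) :
    ∀ k ≥ 1, Int.fract ((n k : ℝ) * α) < (2:ℝ) ^ (-((k * n k : ℕ) : ℤ)) := by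
  have hgap : ∀ j, v (j + 1) + 2 ≤ v (j + 1 + 1) := fun j ↦ by
    have : 0 < (j + 1) * 2 ^ v (j + 1) := by positivity
    rw [hv (j + 1) (by omega)]
    omega
  have hα' : α = ∑' j, (2⁻¹ : ℝ) ^ v (j + 1) := by
    simp only [hα, zpow_neg, zpow_natCast, inv_pow]
  rintro k hk
  obtain ⟨m, rfl⟩ : ∃ m, k = m + 1 := ⟨k - 1, by omega⟩
  calc Int.fract ((n (m + 1) : ℝ) * α)
      ≤ 4 / 3 * (2 ^ v (m + 1) * 2⁻¹ ^ v (m + 1 + 1)) := by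
        rw [hn, hα', Nat.cast_pow, Nat.cast_ofNat]
        exact fract_two_pow_mul_tsum_le_of_gap hgap m
    _ = 2 / 3 * 2⁻¹ ^ ((m + 1) * n (m + 1)) := by
        rw [hv (m + 1) hk, hn, add_comm _ (v (m + 1)), add_assoc, pow_add, ← mul_assoc (2 ^ _),
          two_pow_mul_inv_two_pow_of_le le_rfl, Nat.sub_self, pow_succ]
        ring
    _ < (2 : ℝ) ^ (-(((m + 1) * n (m + 1) : ℕ) : ℤ)) := by
        rw [zpow_neg, zpow_natCast, ← inv_pow]
        linarith [pow_pos (by norm_num : (0 : ℝ) < 2⁻¹) ((m + 1) * n (m + 1))]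

/-- With `v 1 = 1`, `v (k+1) = k·2^(v k) + v k + 1`, `α = Σ_{k≥1} 2^{-v k}`,
`n k = 2^(v k)`: for every `k ≥ 1` the fractional part of `n k · α` is `< 2^{-k·n k}`. -/
theorem stmt2 (v : ℕ → ℕ) (hv1 : v 1 = 1)
    (hv : ∀ k ≥ 1, v (k + 1) = k * 2 ^ (v k) + v k + 1)
    (α : ℝ) (hα : α = ∑' k : ℕ, (2:ℝ) ^ (-(v (k + 1) : ℤ)))
    (n : ℕ → ℕ) (hn : ∀ k, n k = 2 ^ (v k)) :
    ∀ k ≥ 1, Int.fract ((n k : ℝ) * α) < (2:ℝ) ^ (-((k * n k : ℕ) : ℤ)) :=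
  stmt2_general v hv α hα n hn
end

section
/- Let v_k, α, n_k be as follows: v_1 = 1, v_{k+1} = k·2^{v_k} + v_k + 1, α = Σ 2^{-v_k}, n_k = 2^{v_k}, n_{-k} = -n_k. Then the function h_+(ζ) := Σ_{k>0} (1/k)(e^{2πi n_k α} − 1) ζ^{n_k} defines an entire holomorphic function on ℂ, i.e., the power series has infinite radius of convergence. -/
open Complex
open scoped Real

/-!
Write `w j = v (j + 1)`, so that `α = ∑ 2 ^ (-w j)` and `n (k + 1) = 2 ^ w k`. Multiplying `α` by
`2 ^ w k` makes the first `k + 1` terms integers, while the tail is at most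
`2 ^ (w k + 1 - w (k + 1)) = 2 ^ (-((k + 1) * 2 ^ w k))` by the recursion. Since `|e^{2πix} - 1|` is
at most `2π` times the distance from `x` to an integer, the coefficient of `ζ ^ n (k + 1)` is at
most `2π / 2 ^ ((k + 1) * n (k + 1))`, and such a lacunary series converges everywhere.
-/

section LacunaryBinarySum

variable {w : ℕ → ℕ}

lemma summable_inv_two_pow_of_strictMono (hw : StrictMono w) :
    Summable fun j => ((2 : ℝ) ^ w j)⁻¹ := by
  refine summable_geometric_two.of_nonneg_of_le (fun j => by positivity) fun j => ?_
  rw [← inv_pow, inv_eq_one_div]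
  exact pow_le_pow_of_le_one (by norm_num) (by norm_num) (hw.id_le j)

lemma tsum_inv_two_pow_nat_add_le (hw : StrictMono w) (k : ℕ) :
    ∑' j, ((2 : ℝ) ^ w (j + k))⁻¹ ≤ 2 / 2 ^ w k := by
  have hle : ∀ j, ((2 : ℝ) ^ w (j + k))⁻¹ ≤ (2 ^ w k)⁻¹ * (1 / 2) ^ j := fun j => by
    rw [one_div, inv_pow, ← mul_inv, ← pow_add]
    exact inv_anti₀ (by positivity)
      (pow_le_pow_right₀ one_le_two ((add_comm _ _).trans_le (hw.add_le_nat j k)))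
  calc ∑' j, ((2 : ℝ) ^ w (j + k))⁻¹
      ≤ ∑' j, (2 ^ w k)⁻¹ * ((1 : ℝ) / 2) ^ j :=
        (summable_inv_two_pow_of_strictMono hw).comp_injective (add_left_injective k)
          |>.tsum_le_tsum hle (summable_geometric_two.mul_left _)
    _ = 2 / 2 ^ w k := by rw [tsum_mul_left, tsum_geometric_two, inv_mul_eq_div]

lemma exists_int_abs_two_pow_mul_tsum_sub_le (hw : StrictMono w) (k : ℕ) :
    ∃ m : ℤ, |2 ^ w k * ∑' j, ((2 : ℝ) ^ w j)⁻¹ - m| ≤ 2 ^ (w k + 1) / 2 ^ w (k + 1) := by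
  refine ⟨∑ j ∈ Finset.range (k + 1), 2 ^ (w k - w j), ?_⟩
  have hhead : ((∑ j ∈ Finset.range (k + 1), 2 ^ (w k - w j) : ℤ) : ℝ)
      = 2 ^ w k * ∑ j ∈ Finset.range (k + 1), ((2 : ℝ) ^ w j)⁻¹ := by
    push_cast
    rw [Finset.mul_sum]
    refine Finset.sum_congr rfl fun j hj => ?_
    rw [pow_sub₀ _ two_ne_zero (hw.monotone (Finset.mem_range_succ_iff.mp hj))]
  rw [← (summable_inv_two_pow_of_strictMono hw).sum_add_tsum_nat_add (k + 1), mul_add, hhead,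
    add_sub_cancel_left, abs_of_nonneg (by positivity), pow_succ, mul_div_assoc]
  gcongr
  exact tsum_inv_two_pow_nat_add_le hw (k + 1)

end LacunaryBinarySum

lemma norm_exp_two_pi_I_mul_sub_one_le (x : ℝ) (m : ℤ) :
    ‖exp (2 * π * I * x) - 1‖ ≤ 2 * π * |x - m| := by
  have hshift : exp (2 * π * I * x) = exp (I * ((2 * π * (x - m) : ℝ) : ℂ)) := by
    rw [← exp_periodic.sub_int_mul_eq m]
    push_cast
    ring_nf
  rw [hshift]
  refine Real.norm_exp_I_mul_ofReal_sub_one_le.trans_eq ?_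
  rw [Real.norm_eq_abs, abs_mul, abs_of_pos Real.two_pi_pos]

lemma summable_mul_pow_of_norm_le_div_two_pow {a : ℕ → ℂ} {N : ℕ → ℕ} {C : ℝ}
    (hN : ∀ k, N k ≠ 0) (ha : ∀ k, ‖a k‖ ≤ C / 2 ^ ((k + 1) * N k)) (ζ : ℂ) :
    Summable fun k => a k * ζ ^ N k := by
  have hC : 0 ≤ C := by
    have := (norm_nonneg _).trans (ha 0)
    rwa [div_nonneg_iff, or_iff_left (by simp), and_iff_left (by positivity)] at this
  refine Summable.of_norm_bounded_eventually_nat (summable_geometric_two' (C * ‖ζ‖)) ?_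
  filter_upwards [(tendsto_pow_atTop_atTop_of_one_lt one_lt_two).eventually_ge_atTop ‖ζ‖]
    with k hk
  have hr : ‖ζ‖ / 2 ^ (k + 1) ≤ 1 :=
    div_le_one_of_le₀ (hk.trans (pow_le_pow_right₀ one_le_two k.le_succ)) (by positivity)
  calc ‖a k * ζ ^ N k‖ ≤ C / 2 ^ ((k + 1) * N k) * ‖ζ‖ ^ N k := by
        rw [norm_mul, norm_pow]; gcongr; exact ha k
    _ = C * (‖ζ‖ / 2 ^ (k + 1)) ^ N k := by rw [div_pow, ← pow_mul, mul_comm (k + 1)]; ring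
    _ ≤ C * (‖ζ‖ / 2 ^ (k + 1)) := by gcongr; exact pow_le_of_le_one (by positivity) hr (hN k)
    _ = C * ‖ζ‖ / 2 / 2 ^ k := by ring

lemma norm_exp_two_pi_I_mul_two_pow_mul_tsum_sub_one_le {w : ℕ → ℕ}
    (hw : ∀ k, w (k + 1) = (k + 1) * 2 ^ w k + w k + 1) (k : ℕ) :
    ‖exp (2 * π * I * (2 ^ w k * ∑' j, ((2 : ℝ) ^ w j)⁻¹ : ℝ)) - 1‖
      ≤ 2 * π / 2 ^ ((k + 1) * 2 ^ w k) := by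
  have hmono : StrictMono w := strictMono_nat_of_lt_succ fun k => by rw [hw]; omega
  obtain ⟨m, hm⟩ := exists_int_abs_two_pow_mul_tsum_sub_le hmono k
  calc _ ≤ 2 * π * |2 ^ w k * ∑' j, ((2 : ℝ) ^ w j)⁻¹ - m| :=
        norm_exp_two_pi_I_mul_sub_one_le _ m
    _ ≤ 2 * π * (2 ^ (w k + 1) / 2 ^ w (k + 1)) := by gcongr
    _ = 2 * π / 2 ^ ((k + 1) * 2 ^ w k) := by
      rw [hw, add_assoc, pow_add _ ((k + 1) * 2 ^ w k), div_mul_cancel_right₀ (by positivity),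
        ← div_eq_mul_inv]

theorem stmt3_general (v : ℕ → ℕ)
    (hv : ∀ k ≥ 1, v (k + 1) = k * 2 ^ (v k) + v k + 1)
    (α : ℝ) (hα : α = ∑' k : ℕ, (2:ℝ) ^ (-(v (k + 1) : ℤ)))
    (n : ℕ → ℕ) (hn : ∀ k, n k = 2 ^ (v k)) :
    ∀ ζ : ℂ, Summable (fun k : ℕ =>
      (1 / ((k : ℂ) + 1)) *
        (Complex.exp (2 * Real.pi * Complex.I * (n (k + 1) : ℂ) * (α : ℂ)) - 1) *
        ζ ^ (n (k + 1))) := by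
  have hv_succ : ∀ k, v (k + 1 + 1) = (k + 1) * 2 ^ v (k + 1) + v (k + 1) + 1 := fun k => by
    exact_mod_cast hv (k + 1) k.succ_pos
  have hα' : α = ∑' j, ((2 : ℝ) ^ v (j + 1))⁻¹ := by simp only [hα, zpow_neg, zpow_natCast]
  intro ζ
  refine summable_mul_pow_of_norm_le_div_two_pow (C := 2 * π) (fun k => by simp [hn])
    (fun k => ?_) ζ
  have hcoeff : ‖1 / ((k : ℂ) + 1)‖ ≤ 1 := by
    rw [one_div, norm_inv, ← Nat.cast_succ, norm_natCast]
    exact inv_le_one_of_one_le₀ (by simp)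
  have hexp :
      exp (2 * π * I * (n (k + 1) : ℂ) * α) = exp (2 * π * I * (2 ^ v (k + 1) * α : ℝ)) := by
    rw [hn]; push_cast; ring_nf
  rw [norm_mul, hexp, hn, hα']
  exact mul_le_of_le_one_left (norm_nonneg _) hcoeff |>.trans
    (norm_exp_two_pi_I_mul_two_pow_mul_tsum_sub_one_le (w := fun j => v (j + 1)) hv_succ k)

/-- With `v`, `α`, `n k = 2^(v k)` as in Furstenberg's construction, the power series
`h₊(ζ) = Σ_{k>0} (1/k)(e^{2πi n_k α} − 1) ζ^{n_k}` converges for every `ζ ∈ ℂ`,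
i.e. it defines an entire holomorphic function (infinite radius of convergence). -/
theorem stmt3 (v : ℕ → ℕ) (hv1 : v 1 = 1)
    (hv : ∀ k ≥ 1, v (k + 1) = k * 2 ^ (v k) + v k + 1)
    (α : ℝ) (hα : α = ∑' k : ℕ, (2:ℝ) ^ (-(v (k + 1) : ℤ)))
    (n : ℕ → ℕ) (hn : ∀ k, n k = 2 ^ (v k)) :
    ∀ ζ : ℂ, Summable (fun k : ℕ =>
      (1 / ((k : ℂ) + 1)) *
        (Complex.exp (2 * Real.pi * Complex.I * (n (k + 1) : ℂ) * (α : ℂ)) - 1) *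
        ζ ^ (n (k + 1))) :=
  stmt3_general v hv α hα n hn
end
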